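/- Let f be an excursion and ε > 0. Then g := f − Jf + J^ε f is an excursion, x_s^t(g) = x_s^t(f)·1_{Δ_s(f) ≥ ε} for all s,t ∈ [0,1], and Jg = J^ε f. -/

import Mathlib

open Set Filter Topology
open scoped Classical

noncomputable section

/-- Left limit of `f` at `t`, with the convention `f(0−) = 0`. -/
def lm (f : ℝ → ℝ) (t : ℝ) : ℝ := if t = 0 then 0 else Function.leftLim f t

/-- The jump `Δ_t(f) = f t − f(t−)`. -/
def jump (f : ℝ → ℝ) (t : ℝ) : ℝ := f t - lm f t

/-- `inf_{[s,t]} f`. -/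
def infIcc (f : ℝ → ℝ) (s t : ℝ) : ℝ := sInf (f '' Icc s t)

/-- An excursion: a càdlàg function on `[0,1]`, nonnegative, vanishing at `1` (and
extended by `0` outside `[0,1]`), all of whose jumps are nonnegative. -/
structure IsExcursion (f : ℝ → ℝ) : Prop where
  nonneg : ∀ t ∈ Icc (0:ℝ) 1, 0 ≤ f t
  zero_outside : ∀ t, t ∉ Icc (0:ℝ) 1 → f t = 0
  rightCont : ∀ t ∈ Ico (0:ℝ) 1, Tendsto f (𝓝[>] t) (𝓝 (f t))
  leftLimEx : ∀ t ∈ Ioc (0:ℝ) 1, Tendsto f (𝓝[<] t) (𝓝 (Function.leftLim f t))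
  one : f 1 = 0
  jump_nonneg : ∀ t ∈ Icc (0:ℝ) 1, 0 ≤ jump f t

/-- The genealogical relation `s ⪯_f t` : `s ≤ t` and `f(s−) ≤ inf_{[s,t]} f`. -/
def pre (f : ℝ → ℝ) (s t : ℝ) : Prop := s ≤ t ∧ lm f s ≤ infIcc f s t

/-- `x_s^t(f) = 1_{s ≤ t} · max(inf_{[s,t]} f − f(s−), 0)`. -/
def xst (f : ℝ → ℝ) (s t : ℝ) : ℝ := if s ≤ t then max (infIcc f s t - lm f s) 0 else 0

/-- The most recent common ancestor `s ∧_f t`. -/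
def mrca (f : ℝ → ℝ) (s t : ℝ) : ℝ := sSup {r : ℝ | 0 ≤ r ∧ pre f r s ∧ pre f r t}

/-- `δ_t(a,b) = min(|a−b|, Δ_t(f) − |a−b|)`, the circle pseudo-distance on `[0, Δ_t(f)]`. -/
def cdel (f : ℝ → ℝ) (t a b : ℝ) : ℝ := min |a - b| (jump f t - |a - b|)

/-- `d_O(s,t) = ∑_{s ≺_f r ⪯_f t} δ_r(0, x_r^t)`. -/
def dO (f : ℝ → ℝ) (s t : ℝ) : ℝ :=
  ∑' r : ℝ, if pre f s r ∧ s < r ∧ pre f r t then cdel f r 0 (xst f r t) else 0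

/-- `d_T(s,t) = f t − inf_{[s,t]} f − ∑_{s ≺_f r ⪯_f t} x_r^t`, intended for `s ⪯_f t`. -/
def dTanc (f : ℝ → ℝ) (s t : ℝ) : ℝ :=
  f t - infIcc f s t - ∑' r : ℝ, if pre f s r ∧ s < r ∧ pre f r t then xst f r t else 0

/-- The looptree pseudo-distance `d_L[f]`. -/
def dL (f : ℝ → ℝ) (s t : ℝ) : ℝ :=
  cdel f (mrca f s t) (xst f (mrca f s t) s) (xst f (mrca f s t) t)
    + dO f (mrca f s t) s + dO f (mrca f s t) t

/-- The tree pseudo-distance `d_T[f]`. -/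
def dT (f : ℝ → ℝ) (s t : ℝ) : ℝ := dTanc f (mrca f s t) s + dTanc f (mrca f s t) t

/-- The vernation pseudo-distance `d_V[f] = d_T[f] + 2·d_L[f]`. -/
def dV (f : ℝ → ℝ) (s t : ℝ) : ℝ := dT f s t + 2 * dL f s t

/-- `Jf(t) = ∑_{r ⪯_f t} x_r^t(f)`. -/
def Jop (f : ℝ → ℝ) (t : ℝ) : ℝ := ∑' r : ℝ, if pre f r t then xst f r t else 0

/-- `J^ε f(t) = ∑_{r ⪯_f t, Δ_r(f) ≥ ε} x_r^t(f)`. -/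
def Jeps (f : ℝ → ℝ) (ε : ℝ) (t : ℝ) : ℝ :=
  ∑' r : ℝ, if pre f r t ∧ ε ≤ jump f r then xst f r t else 0

/-- Pure jump growth (PJG) excursion: `f(t) = ∑_{r ⪯_f t} x_r^t(f)` on `[0,1]`. -/
def IsPJG (f : ℝ → ℝ) : Prop := ∀ t ∈ Icc (0:ℝ) 1, f t = Jop f t

/-- An increasing bijection from `[0,1]` onto itself. -/
def IncBij (l : ℝ → ℝ) : Prop :=
  StrictMonoOn l (Icc (0:ℝ) 1) ∧ Set.BijOn l (Icc (0:ℝ) 1) (Icc (0:ℝ) 1)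

/-- The Skorokhod distance `ρ` on functions `[0,1] → ℝ`. -/
def skor (f g : ℝ → ℝ) : ℝ :=
  sInf {c : ℝ | 0 ≤ c ∧ ∃ l : ℝ → ℝ, IncBij l ∧
    ∀ x ∈ Icc (0:ℝ) 1, |l x - x| ≤ c ∧ |f x - g (l x)| ≤ c}

/-!
Write `J_T f (u) = ∑_{r ∈ T} x_r^u(f)`, so that `g = f - J_T f` for `T` the set of jump times of
size `< ε`. The intervals `[f(r−), inf_{[r,u]} f]`, `r ≤ u`, of lengths `x_r^u(f)`, follow each
other upwards as `r` increases, so their lengths clipped to a window `[c, M]` add up to at most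
`M - c`. Split every `x_r^u(f)` at a level `c ≤ inf_{[s,u]} f`: the part below `c` does not depend
on `u ≥ s`, and the parts above `c` add up to at most `f u - c`. Hence on `[s,t]` the function `g`
is `f` shifted down by a constant, up to an error of at most `f - inf_{[s,t]} f`; this gives
`inf_{[s,t]} g`, hence `x_s^t(g)`, and shows that `J_T f` is càdlàg with jumps exactly `Δ_u(f)`
at the times `u ∈ T`.
-/

theorem sum_max_sub_max_le_of_chain {ι : Type*} [LinearOrder ι] {lo hi : ι → ℝ} (c : ℝ)
    (F : Finset ι) (M : ℝ) (hchain : ∀ i ∈ F, ∀ j ∈ F, i < j → hi i ≤ lo j)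
    (hM : ∀ i ∈ F, hi i ≤ M) : ∑ i ∈ F, max (hi i - max (lo i) c) 0 ≤ max (M - c) 0 := by
  induction F using Finset.induction_on_max generalizing M with
  | empty => simp
  | insert a F ha ih =>
    have hmem : ∀ i ∈ F, i ∈ insert a F := fun i hi => Finset.mem_insert_of_mem hi
    have haF := Finset.mem_insert_self a F
    rw [Finset.sum_insert fun h => lt_irrefl a (ha a h)]
    have hF : ∑ i ∈ F, max (hi i - max (lo i) c) 0 ≤ max (min M (lo a) - c) 0 :=
      ih _ (fun i hi j hj => hchain i (hmem i hi) j (hmem j hj))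
        fun i hi => le_min (hM i (hmem i hi)) (hchain i (hmem i hi) a haF (ha i hi))
    have haM := hM a haF
    calc _ ≤ max (hi a - max (lo a) c) 0 + max (min M (lo a) - c) 0 := by gcongr
      _ ≤ max (M - c) 0 := by
        simp only [max_def, min_def]
        split_ifs <;> linarith

section InfIcc

variable {f g : ℝ → ℝ}

theorem infIcc_le (hb : BddBelow (range f)) {s t u : ℝ} (hu : u ∈ Icc s t) :
    infIcc f s t ≤ f u :=
  csInf_le (hb.mono (image_subset_range _ _)) (mem_image_of_mem f hu)

theorem le_infIcc {s t c : ℝ} (hst : s ≤ t) (h : ∀ u ∈ Icc s t, c ≤ f u) : c ≤ infIcc f s t :=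
  le_csInf ((nonempty_Icc.2 hst).image f) (forall_mem_image.2 h)

theorem infIcc_self (f : ℝ → ℝ) (t : ℝ) : infIcc f t t = f t := by
  rw [infIcc, Icc_self, image_singleton, csInf_singleton]

theorem infIcc_split (hb : BddBelow (range f)) {s u t : ℝ} (hsu : s ≤ u) (hut : u ≤ t) :
    infIcc f s t = min (infIcc f s u) (infIcc f u t) := by
  rw [infIcc, ← Icc_union_Icc_eq_Icc hsu hut, image_union,
    csInf_union (hb.mono (image_subset_range _ _)) ((nonempty_Icc.2 hsu).image f)
      (hb.mono (image_subset_range _ _)) ((nonempty_Icc.2 hut).image f)]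
  rfl

theorem infIcc_eq_sub_of_bounds {s t K : ℝ} (hst : s ≤ t)
    (hlow : ∀ u ∈ Icc s t, infIcc f s t - K ≤ g u) (hup : ∀ u ∈ Icc s t, g u ≤ f u - K) :
    infIcc g s t = infIcc f s t - K := by
  have hb : BddBelow (g '' Icc s t) := ⟨_, forall_mem_image.2 hlow⟩
  refine le_antisymm ?_ (le_infIcc hst hlow)
  suffices infIcc g s t + K ≤ infIcc f s t by linarith
  refine le_infIcc hst fun u hu => ?_
  have hgu : infIcc g s t ≤ g u := csInf_le hb (mem_image_of_mem g hu)
  linarith [hup u hu]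

theorem tendsto_infIcc_nhdsGT (hb : BddBelow (range f)) {t : ℝ}
    (hf : Tendsto f (𝓝[>] t) (𝓝 (f t))) : Tendsto (infIcc f t) (𝓝[>] t) (𝓝 (f t)) := by
  refine tendsto_order.2 ⟨fun a ha => ?_, fun a ha => ?_⟩
  · obtain ⟨a', haa', ha't⟩ := exists_between ha
    obtain ⟨w, hw, hsub⟩ := mem_nhdsGT_iff_exists_Ioo_subset.1 (hf.eventually (lt_mem_nhds ha't))
    filter_upwards [Ioo_mem_nhdsGT hw] with u hu
    refine haa'.trans_le (le_infIcc hu.1.le fun v hv => ?_)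
    rcases hv.1.eq_or_lt with rfl | htv
    · exact ha't.le
    · exact (hsub ⟨htv, hv.2.trans_lt hu.2⟩).le
  · filter_upwards [self_mem_nhdsWithin] with u (htu : t < u)
    exact (infIcc_le hb ⟨le_rfl, htu.le⟩).trans_lt ha

theorem tendsto_infIcc_nhdsLT (hb : BddBelow (range f)) {b L : ℝ}
    (hf : Tendsto f (𝓝[<] b) (𝓝 L)) (hL : L ≤ f b) :
    Tendsto (fun a => infIcc f a b) (𝓝[<] b) (𝓝 L) := by
  refine tendsto_order.2 ⟨fun a ha => ?_, fun a ha => ?_⟩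
  · obtain ⟨a', haa', ha'L⟩ := exists_between ha
    obtain ⟨l, hl, hsub⟩ := mem_nhdsLT_iff_exists_Ioo_subset.1 (hf.eventually (lt_mem_nhds ha'L))
    filter_upwards [Ioo_mem_nhdsLT hl] with x hx
    refine haa'.trans_le (le_infIcc hx.2.le fun v hv => ?_)
    rcases hv.2.eq_or_lt with rfl | hvb
    · exact (ha'L.trans_le hL).le
    · exact (hsub ⟨hx.1.trans_le hv.1, hvb⟩).le
  · filter_upwards [hf.eventually (gt_mem_nhds ha), self_mem_nhdsWithin] with x hx (hxb : x < b)
    exact (infIcc_le hb ⟨le_rfl, hxb.le⟩).trans_lt hx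

end InfIcc

theorem lm_eq_zero_of_notMem_Ioc {f : ℝ → ℝ} (hf : ∀ t ∉ Icc (0:ℝ) 1, f t = 0) {s : ℝ}
    (hs : s ∉ Ioc (0:ℝ) 1) : lm f s = 0 := by
  unfold lm
  split_ifs with h0
  · rfl
  refine leftLim_eq_of_tendsto (tendsto_const_nhds.congr' ?_)
  have hout : (Icc (0:ℝ) 1)ᶜ ∈ 𝓝[<] s := by
    rcases (not_and_or.1 hs).imp not_lt.1 not_le.1 with hs0 | hs1
    · exact mem_of_superset self_mem_nhdsWithin fun v (hv : v < s) hv' =>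
        (hv.trans (lt_of_le_of_ne hs0 h0)).not_ge hv'.1
    · exact mem_of_superset (Ioo_mem_nhdsLT hs1) fun v hv hv' => hv.1.not_ge hv'.2
  filter_upwards [hout] with v hv
  exact (hf v hv).symm

section Excursion

variable {f : ℝ → ℝ}

theorem IsExcursion.nonneg' (hf : IsExcursion f) (t : ℝ) : 0 ≤ f t := by
  by_cases ht : t ∈ Icc (0:ℝ) 1
  · exact hf.nonneg t ht
  · exact (hf.zero_outside t ht).symm.le

theorem IsExcursion.bddBelow (hf : IsExcursion f) : BddBelow (range f) :=
  ⟨0, forall_mem_range.2 hf.nonneg'⟩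

theorem IsExcursion.lm_eq_zero (hf : IsExcursion f) {s : ℝ} (hs : s ∉ Ioc (0:ℝ) 1) :
    lm f s = 0 :=
  lm_eq_zero_of_notMem_Ioc hf.zero_outside hs

theorem IsExcursion.lm_nonneg (hf : IsExcursion f) (s : ℝ) : 0 ≤ lm f s := by
  by_cases hs : s ∈ Ioc (0:ℝ) 1
  · rw [lm, if_neg hs.1.ne']
    exact ge_of_tendsto (hf.leftLimEx s hs) (Eventually.of_forall hf.nonneg')
  · exact (hf.lm_eq_zero hs).symm.le

theorem IsExcursion.lm_le (hf : IsExcursion f) (s : ℝ) : lm f s ≤ f s := by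
  by_cases hs : s ∈ Ioc (0:ℝ) 1
  · exact sub_nonneg.1 (hf.jump_nonneg s (Ioc_subset_Icc_self hs))
  · exact (hf.lm_eq_zero hs).trans_le (hf.nonneg' s)

theorem IsExcursion.infIcc_le_lm (hf : IsExcursion f) {r r' u : ℝ} (hr : r < r')
    (hr' : r' ≤ u) : infIcc f r u ≤ lm f r' := by
  by_cases hI : r' ∈ Ioc (0:ℝ) 1
  · rw [lm, if_neg hI.1.ne']
    refine ge_of_tendsto (hf.leftLimEx r' hI) ?_
    filter_upwards [Ioo_mem_nhdsLT hr] with v hv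
    exact infIcc_le hf.bddBelow ⟨hv.1.le, hv.2.le.trans hr'⟩
  rw [hf.lm_eq_zero hI]
  by_cases h0 : r' ≤ 0
  · refine (infIcc_le hf.bddBelow ⟨le_rfl, (hr.trans_le hr').le⟩).trans_eq ?_
    exact hf.zero_outside r fun h => (hr.trans_le h0).not_ge h.1
  · refine (infIcc_le hf.bddBelow ⟨(hr.trans_le hr').le, le_rfl⟩).trans_eq ?_
    exact hf.zero_outside u fun h => hI ⟨not_le.1 h0, hr'.trans h.2⟩

end Excursion

def xstAbove (f : ℝ → ℝ) (c r u : ℝ) : ℝ :=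
  if r ≤ u then max (infIcc f r u - max (lm f r) c) 0 else 0

def xstBelow (f : ℝ → ℝ) (c r u : ℝ) : ℝ :=
  if r ≤ u then max (min (infIcc f r u) c - lm f r) 0 else 0

def JOn (f : ℝ → ℝ) (T : Set ℝ) (u : ℝ) : ℝ := ∑' r, T.indicator (fun r => xst f r u) r

def JAbove (f : ℝ → ℝ) (T : Set ℝ) (c u : ℝ) : ℝ :=
  ∑' r, T.indicator (fun r => xstAbove f c r u) r

def prune (f : ℝ → ℝ) (T : Set ℝ) (u : ℝ) : ℝ := f u - JOn f T u

theorem ite_pre_xst (F : ℝ → ℝ) (r t : ℝ) : (if pre F r t then xst F r t else 0) = xst F r t := by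
  split_ifs with h
  · rfl
  unfold pre at h
  unfold xst
  split_ifs with hrt
  · exact (max_eq_right (by linarith [not_le.1 fun h' => h ⟨hrt, h'⟩])).symm
  · rfl

theorem Jop_eq_tsum (F : ℝ → ℝ) (t : ℝ) : Jop F t = ∑' r, xst F r t :=
  tsum_congr fun r => ite_pre_xst F r t

theorem Jeps_eq_JOn (f : ℝ → ℝ) (ε t : ℝ) : Jeps f ε t = JOn f {r | ε ≤ jump f r} t :=
  tsum_congr fun r => by
    by_cases h : ε ≤ jump f r <;> simp [h, ite_pre_xst]

section Levels

variable {f : ℝ → ℝ} {T : Set ℝ} {c s u : ℝ}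

theorem xstAbove_nonneg (f : ℝ → ℝ) (c r u : ℝ) : 0 ≤ xstAbove f c r u := by
  unfold xstAbove; split_ifs <;> simp

theorem JAbove_nonneg (f : ℝ → ℝ) (T : Set ℝ) (c u : ℝ) : 0 ≤ JAbove f T c u :=
  tsum_nonneg fun r => indicator_nonneg (fun r _ => xstAbove_nonneg f c r u) r

theorem xst_eq_xstBelow_add_xstAbove (f : ℝ → ℝ) (c r u : ℝ) :
    xst f r u = xstBelow f c r u + xstAbove f c r u := by
  unfold xst xstBelow xstAbove
  split_ifs
  · simp only [max_def, min_def]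
    split_ifs <;> linarith
  · simp

theorem IsExcursion.xstAbove_zero (hf : IsExcursion f) (r u : ℝ) :
    xstAbove f 0 r u = xst f r u := by
  rw [xstAbove, xst, max_eq_left (hf.lm_nonneg r)]

theorem IsExcursion.xstAbove_self (hf : IsExcursion f) (hc : c ≤ f u) :
    xstAbove f c u u = jump f u - max (c - lm f u) 0 := by
  rw [xstAbove, if_pos le_rfl, infIcc_self, jump,
    max_eq_left (sub_nonneg.2 (max_le (hf.lm_le u) hc))]
  rcases le_total c (lm f u) with h | h
  · rw [max_eq_left h, max_eq_right (sub_nonpos.2 h)]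
    ring
  · rw [max_eq_right h, max_eq_left (sub_nonneg.2 h)]
    ring

theorem IsExcursion.xstBelow_eq (hf : IsExcursion f) (hsu : s ≤ u) (hc : c ≤ infIcc f s u)
    (r : ℝ) : xstBelow f c r u = xstBelow f c r s := by
  unfold xstBelow
  by_cases hrs : r ≤ s
  · rw [if_pos (hrs.trans hsu), if_pos hrs, infIcc_split hf.bddBelow hrs hsu, min_assoc,
      min_eq_right hc]
  rw [if_neg hrs]
  split_ifs with hru
  · have := hf.infIcc_le_lm (not_le.1 hrs) hru
    exact max_eq_right (by linarith [min_le_right (infIcc f r u) c])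
  · rfl

theorem IsExcursion.sum_indicator_xstAbove_le (hf : IsExcursion f) {M : ℝ}
    (hM : ∀ r ∈ T, r ≤ u → infIcc f r u ≤ M) (F : Finset ℝ) :
    ∑ r ∈ F, T.indicator (fun r => xstAbove f c r u) r ≤ max (M - c) 0 := by
  have hterm : ∀ r, T.indicator (fun r => xstAbove f c r u) r =
      if r ∈ T ∧ r ≤ u then max (infIcc f r u - max (lm f r) c) 0 else 0 := fun r => by
    simp only [indicator_apply, xstAbove, ite_and]
  simp only [hterm, ← Finset.sum_filter]
  refine sum_max_sub_max_le_of_chain (lo := lm f) (hi := fun r => infIcc f r u) c _ M ?_ ?_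
  · intro i _ j hj hij
    exact hf.infIcc_le_lm hij (Finset.mem_filter.1 hj).2.2
  · intro i hi
    exact hM i (Finset.mem_filter.1 hi).2.1 (Finset.mem_filter.1 hi).2.2

theorem IsExcursion.summable_indicator_xstAbove (hf : IsExcursion f) (T : Set ℝ) (c u : ℝ) :
    Summable (T.indicator fun r => xstAbove f c r u) :=
  summable_of_sum_le (fun r => indicator_nonneg (fun r _ => xstAbove_nonneg f c r u) r)
    (hf.sum_indicator_xstAbove_le fun _ _ hr => infIcc_le hf.bddBelow ⟨hr, le_rfl⟩)

theorem IsExcursion.JAbove_le (hf : IsExcursion f) {M : ℝ}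
    (hM : ∀ r ∈ T, r ≤ u → infIcc f r u ≤ M) : JAbove f T c u ≤ max (M - c) 0 :=
  tsum_le_of_sum_le' (le_max_right _ _) (hf.sum_indicator_xstAbove_le hM)

theorem IsExcursion.JAbove_le_sub (hf : IsExcursion f) (hc : c ≤ f u) :
    JAbove f T c u ≤ f u - c :=
  (hf.JAbove_le fun _ _ hr => infIcc_le hf.bddBelow ⟨hr, le_rfl⟩).trans_eq
    (max_eq_left (sub_nonneg.2 hc))

theorem IsExcursion.JAbove_diff_singleton_le (hf : IsExcursion f) (hc : c ≤ lm f u) :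
    JAbove f (T \ {u}) c u ≤ lm f u - c :=
  (hf.JAbove_le fun _ hr hru => hf.infIcc_le_lm (lt_of_le_of_ne hru hr.2) le_rfl).trans_eq
    (max_eq_left (sub_nonneg.2 hc))

theorem IsExcursion.JAbove_eq_diff_singleton_add (hf : IsExcursion f) :
    JAbove f T c u = JAbove f (T \ {u}) c u + T.indicator (fun r => xstAbove f c r u) u := by
  rw [JAbove, JAbove, (hf.summable_indicator_xstAbove T c u).tsum_eq_add_tsum_ite u, add_comm]
  congr 1
  refine tsum_congr fun r => ?_
  by_cases hr : r = u
  · simp [hr]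
  · simp [hr, indicator_apply]

theorem IsExcursion.JAbove_eq_diff_singleton_add_jump (hf : IsExcursion f) (hc : c ≤ lm f u) :
    JAbove f T c u = JAbove f (T \ {u}) c u + T.indicator (jump f) u := by
  rw [hf.JAbove_eq_diff_singleton_add, indicator_apply, indicator_apply,
    hf.xstAbove_self (hc.trans (hf.lm_le u)), max_eq_right (sub_nonpos.2 hc), sub_zero]

theorem IsExcursion.JOn_eq_JAbove_zero (hf : IsExcursion f) : JOn f T u = JAbove f T 0 u := by
  simp only [JOn, JAbove, hf.xstAbove_zero]

theorem IsExcursion.summable_indicator_xst (hf : IsExcursion f) (T : Set ℝ) (u : ℝ) :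
    Summable (T.indicator fun r => xst f r u) := by
  simpa only [hf.xstAbove_zero] using hf.summable_indicator_xstAbove T 0 u

theorem IsExcursion.JOn_nonneg (hf : IsExcursion f) (T : Set ℝ) (u : ℝ) : 0 ≤ JOn f T u :=
  hf.JOn_eq_JAbove_zero.symm ▸ JAbove_nonneg f T 0 u

theorem IsExcursion.JOn_le (hf : IsExcursion f) (T : Set ℝ) (u : ℝ) : JOn f T u ≤ f u := by
  simpa [hf.JOn_eq_JAbove_zero] using hf.JAbove_le_sub (T := T) (hf.nonneg' u)

theorem IsExcursion.JOn_sub_JAbove_eq (hf : IsExcursion f) (hsu : s ≤ u)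
    (hc : c ≤ infIcc f s u) : JOn f T u - JAbove f T c u = JOn f T s - JAbove f T c s := by
  have hbelow : ∀ v, JOn f T v - JAbove f T c v =
      ∑' r, T.indicator (fun r => xstBelow f c r v) r := fun v => by
    rw [JOn, JAbove, ← (hf.summable_indicator_xst T v).tsum_sub
      (hf.summable_indicator_xstAbove T c v)]
    refine tsum_congr fun r => ?_
    by_cases hr : r ∈ T <;> simp [hr, xst_eq_xstBelow_add_xstAbove f c]
  simp only [hbelow, hf.xstBelow_eq hsu hc]

theorem IsExcursion.JOn_sub_JOn (hf : IsExcursion f) {a b : ℝ} (hab : a ≤ b) :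
    JOn f T b - JOn f T a = JAbove f T (infIcc f a b) b - JAbove f T (infIcc f a b) a := by
  linarith [hf.JOn_sub_JAbove_eq (T := T) hab le_rfl]

end Levels

section Prune

variable {f : ℝ → ℝ}

theorem IsExcursion.tendsto_JOn_nhdsGT (hf : IsExcursion f) (T : Set ℝ) {t : ℝ}
    (ht : t ∈ Ico (0:ℝ) 1) : Tendsto (JOn f T) (𝓝[>] t) (𝓝 (JOn f T t)) := by
  have hcont := hf.rightCont t ht
  have hinf := tendsto_infIcc_nhdsGT hf.bddBelow hcont
  have hosc : Tendsto (fun u => (f u - infIcc f t u) + (f t - infIcc f t u)) (𝓝[>] t) (𝓝 0) := by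
    simpa using (hcont.sub hinf).add ((tendsto_const_nhds (x := f t)).sub hinf)
  rw [tendsto_iff_norm_sub_tendsto_zero]
  refine squeeze_zero' (Eventually.of_forall fun _ => norm_nonneg _) ?_ hosc
  filter_upwards [self_mem_nhdsWithin] with u (htu : t < u)
  have hct : infIcc f t u ≤ f t := infIcc_le hf.bddBelow ⟨le_rfl, htu.le⟩
  have hcu : infIcc f t u ≤ f u := infIcc_le hf.bddBelow ⟨htu.le, le_rfl⟩
  have hdiff := hf.JOn_sub_JOn (T := T) htu.le
  rw [Real.norm_eq_abs, abs_le]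
  constructor <;> linarith [hf.JAbove_le_sub (T := T) hct, hf.JAbove_le_sub (T := T) hcu,
    JAbove_nonneg f T (infIcc f t u) u, JAbove_nonneg f T (infIcc f t u) t]

theorem IsExcursion.tendsto_JOn_nhdsLT (hf : IsExcursion f) (T : Set ℝ) {b : ℝ}
    (hb : b ∈ Ioc (0:ℝ) 1) :
    Tendsto (JOn f T) (𝓝[<] b) (𝓝 (JOn f T b - T.indicator (jump f) b)) := by
  have hlim : Tendsto f (𝓝[<] b) (𝓝 (lm f b)) := by
    simpa [lm, hb.1.ne'] using hf.leftLimEx b hb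
  have hinf := tendsto_infIcc_nhdsLT hf.bddBelow hlim (hf.lm_le b)
  have hosc : Tendsto (fun a => (lm f b - infIcc f a b) + (f a - infIcc f a b)) (𝓝[<] b)
      (𝓝 0) := by
    simpa using ((tendsto_const_nhds (x := lm f b)).sub hinf).add (hlim.sub hinf)
  rw [tendsto_iff_norm_sub_tendsto_zero]
  refine squeeze_zero' (Eventually.of_forall fun _ => norm_nonneg _) ?_ hosc
  filter_upwards [self_mem_nhdsWithin] with a (hab : a < b)
  have hcb : infIcc f a b ≤ lm f b := hf.infIcc_le_lm hab le_rfl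
  have hca : infIcc f a b ≤ f a := infIcc_le hf.bddBelow ⟨le_rfl, hab.le⟩
  have hdiff := hf.JOn_sub_JOn (T := T) hab.le
  rw [hf.JAbove_eq_diff_singleton_add_jump hcb] at hdiff
  rw [Real.norm_eq_abs, abs_le]
  constructor <;> linarith [hf.JAbove_diff_singleton_le (T := T) hcb,
    hf.JAbove_le_sub (T := T) hca, JAbove_nonneg f (T \ {b}) (infIcc f a b) b,
    JAbove_nonneg f T (infIcc f a b) a]

theorem IsExcursion.prune_nonneg (hf : IsExcursion f) (T : Set ℝ) (u : ℝ) :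
    0 ≤ prune f T u :=
  sub_nonneg.2 (hf.JOn_le T u)

theorem IsExcursion.prune_eq_zero (hf : IsExcursion f) (T : Set ℝ) {u : ℝ} (hu : f u = 0) :
    prune f T u = 0 := by
  have := hf.JOn_le T u
  have := hf.JOn_nonneg T u
  rw [prune]
  linarith

theorem IsExcursion.lm_prune (hf : IsExcursion f) (T : Set ℝ) (s : ℝ) :
    lm (prune f T) s = lm f s - JOn f T s + T.indicator (jump f) s := by
  by_cases hs : s ∈ Ioc (0:ℝ) 1
  · have h : Tendsto (prune f T) (𝓝[<] s) _ :=
      (hf.leftLimEx s hs).sub (hf.tendsto_JOn_nhdsLT T hs)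
    rw [lm, lm, if_neg hs.1.ne', if_neg hs.1.ne', leftLim_eq_of_tendsto h]
    ring
  · have hsplit := hf.JAbove_eq_diff_singleton_add_jump (T := T) (hf.lm_nonneg s)
    have hrest := hf.JAbove_diff_singleton_le (T := T) (hf.lm_nonneg s)
    rw [lm_eq_zero_of_notMem_Ioc (fun t ht => hf.prune_eq_zero T (hf.zero_outside t ht)) hs,
      hf.JOn_eq_JAbove_zero, hsplit]
    rw [hf.lm_eq_zero hs] at hrest ⊢
    linarith [JAbove_nonneg f (T \ {s}) 0 s]

theorem isExcursion_prune (hf : IsExcursion f) (T : Set ℝ) : IsExcursion (prune f T) where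
  nonneg t _ := hf.prune_nonneg T t
  zero_outside t ht := hf.prune_eq_zero T (hf.zero_outside t ht)
  rightCont t ht := (hf.rightCont t ht).sub (hf.tendsto_JOn_nhdsGT T ht)
  leftLimEx t ht := by
    have h : Tendsto (prune f T) (𝓝[<] t) _ :=
      (hf.leftLimEx t ht).sub (hf.tendsto_JOn_nhdsLT T ht)
    rwa [leftLim_eq_of_tendsto h]
  one := hf.prune_eq_zero T hf.one
  jump_nonneg t ht := by
    have hT : T.indicator (jump f) t ≤ jump f t :=
      indicator_le_self' (fun s _ => sub_nonneg.2 (hf.lm_le s)) t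
    rw [jump, hf.lm_prune, prune]
    rw [jump] at hT
    linarith

theorem IsExcursion.xst_prune (hf : IsExcursion f) (T : Set ℝ) (s t : ℝ) :
    xst (prune f T) s t = if s ∈ T then 0 else xst f s t := by
  by_cases hst : s ≤ t
  swap
  · simp [xst, hst]
  set m := infIcc f s t
  have hprune : ∀ u ∈ Icc s t,
      prune f T u = f u - JAbove f T m u - (JOn f T s - JAbove f T m s) := fun u hu => by
    have hmu : m ≤ infIcc f s u :=
      le_infIcc hu.1 fun v hv => infIcc_le hf.bddBelow ⟨hv.1, hv.2.trans hu.2⟩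
    linarith [hf.JOn_sub_JAbove_eq (T := T) hu.1 hmu, show prune f T u = f u - JOn f T u from rfl]
  have hinf : infIcc (prune f T) s t = m - (JOn f T s - JAbove f T m s) := by
    refine infIcc_eq_sub_of_bounds hst (fun u hu => ?_) (fun u hu => ?_) <;> rw [hprune u hu]
    · linarith [hf.JAbove_le_sub (T := T) (infIcc_le hf.bddBelow hu)]
    · linarith [JAbove_nonneg f T m u]
  have hms : m ≤ f s := infIcc_le hf.bddBelow ⟨le_rfl, hst⟩
  have hR := JAbove_nonneg f (T \ {s}) m s
  have hR' : JAbove f (T \ {s}) m s ≤ max (lm f s - m) 0 :=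
    hf.JAbove_le fun _ hr hrs => hf.infIcc_le_lm (lt_of_le_of_ne hrs hr.2) le_rfl
  have hsign : max (m - lm f s) 0 - max (lm f s - m) 0 = m - lm f s := by
    rw [← neg_sub m, max_zero_sub_max_neg_zero_eq_self]
  rw [xst, xst, if_pos hst, if_pos hst, hinf, hf.lm_prune, hf.JAbove_eq_diff_singleton_add]
  by_cases hsT : s ∈ T
  · rw [if_pos hsT, indicator_of_mem hsT, indicator_of_mem hsT, hf.xstAbove_self hms]
    exact max_eq_right (by linarith)
  · rw [if_neg hsT, indicator_of_notMem hsT, indicator_of_notMem hsT]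
    rcases le_total m (lm f s) with h | h
    · rw [max_eq_left (sub_nonneg.2 h)] at hR'
      rw [max_eq_right (sub_nonpos.2 h), max_eq_right (by linarith)]
    · rw [max_eq_right (sub_nonpos.2 h)] at hR'
      congr 1
      linarith

theorem IsExcursion.Jop_eq_JOn_add_JOn_compl (hf : IsExcursion f) (S : Set ℝ) (t : ℝ) :
    Jop f t = JOn f S t + JOn f Sᶜ t := by
  rw [Jop_eq_tsum, JOn, JOn, ← (hf.summable_indicator_xst S t).tsum_add
    (hf.summable_indicator_xst Sᶜ t)]
  exact tsum_congr fun r => (indicator_self_add_compl_apply S (fun r => xst f r t) r).symm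

theorem IsExcursion.Jop_prune (hf : IsExcursion f) (T : Set ℝ) (t : ℝ) :
    Jop (prune f T) t = JOn f Tᶜ t := by
  rw [Jop_eq_tsum, JOn]
  exact tsum_congr fun r => by by_cases hr : r ∈ T <;> simp [hr, hf.xst_prune]

end Prune

theorem statement11_general (f : ℝ → ℝ) (hf : IsExcursion f) (ε : ℝ) :
    IsExcursion (fun t => f t - Jop f t + Jeps f ε t) ∧
    (∀ s ∈ Icc (0:ℝ) 1, ∀ t ∈ Icc (0:ℝ) 1,
        xst (fun u => f u - Jop f u + Jeps f ε u) s t =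
          if ε ≤ jump f s then xst f s t else 0) ∧
    (∀ t ∈ Icc (0:ℝ) 1, Jop (fun u => f u - Jop f u + Jeps f ε u) t = Jeps f ε t) := by
  have hg : (fun u => f u - Jop f u + Jeps f ε u) = prune f {r | ε ≤ jump f r}ᶜ := by
    funext u
    rw [prune, hf.Jop_eq_JOn_add_JOn_compl {r | ε ≤ jump f r} u, Jeps_eq_JOn]
    ring
  rw [hg]
  refine ⟨isExcursion_prune hf _, fun s _ t _ => ?_, fun t _ => ?_⟩
  · by_cases h : ε ≤ jump f s <;> simp [h, hf.xst_prune]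
  · rw [hf.Jop_prune, compl_compl, Jeps_eq_JOn]

theorem statement11 (f : ℝ → ℝ) (hf : IsExcursion f) (ε : ℝ) (hε : 0 < ε) :
    IsExcursion (fun t => f t - Jop f t + Jeps f ε t) ∧
    (∀ s ∈ Icc (0:ℝ) 1, ∀ t ∈ Icc (0:ℝ) 1,
        xst (fun u => f u - Jop f u + Jeps f ε u) s t =
          if ε ≤ jump f s then xst f s t else 0) ∧
    (∀ t ∈ Icc (0:ℝ) 1, Jop (fun u => f u - Jop f u + Jeps f ε u) t = Jeps f ε t) :=
  statement11_general f hf ε
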